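/- arXiv:0808.1490 — 8 statements merged into one kernel-verified Lean document; each statement's English description precedes it below -/
import Mathlib

section
/- If smooth functions u, v, h : ℝ³ → ℝ satisfy the rotating shallow water equations u_t + u·u_x + v·u_y − f·v + g·h_x = 0, v_t + u·v_x + v·v_y + f·u + g·h_y = 0, h_t + (u·h)_x + (v·h)_y = 0, and h is nowhere zero, then the potential vorticity Ω = (v_x − u_y + f)/h is transported by the flow: Ω_t + u·Ω_x + v·Ω_y = 0. -/
/-!
Write `D/Dt = ∂_t + u ∂_x + v ∂_y` for the material derivative and `δ = u_x + v_y` for the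
divergence of the flow. Applying `∂_y` to the first momentum equation and `∂_x` to the second and
subtracting (mixed partials commute because the fields are `C²`), the pressure terms `g h_xy`
cancel and the absolute vorticity `ζ = v_x - u_y + f` obeys `Dζ/Dt = -ζ δ`. The continuity
equation says `Dh/Dt = -h δ`. Vorticity and depth are thus stretched at the same rate, and the
quotient rule gives `D(ζ/h)/Dt = (h Dζ/Dt - ζ Dh/Dt)/h² = 0`.
-/

namespace ShallowWater

section DirectionalDerivative

variable {E : Type*} [NormedAddCommGroup E] [NormedSpace ℝ E]

noncomputable def dirDeriv (w : E) (F : E → ℝ) : E → ℝ := fun p => fderiv ℝ F p w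

theorem dirDeriv_comm {F : E → ℝ} (hF : ContDiff ℝ 2 F) (a b : E) :
    dirDeriv a (dirDeriv b F) = dirDeriv b (dirDeriv a F) := by
  have hF' : Differentiable ℝ (fderiv ℝ F) :=
    (hF.fderiv_right (m := 1) le_rfl).differentiable one_ne_zero
  have dirDeriv_dirDeriv (p v w : E) :
      dirDeriv v (dirDeriv w F) p = fderiv ℝ (fderiv ℝ F) p v w := by
    unfold dirDeriv
    rw [fderiv_clm_apply (u := fun _ => w) (hF' p) (differentiableAt_const w)]
    simp
  funext p
  rw [dirDeriv_dirDeriv, dirDeriv_dirDeriv, hF.contDiffAt.isSymmSndFDerivAt (by simp)]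

variable {F G : E → ℝ} {p : E} (w : E)

@[fun_prop]
theorem differentiable_dirDeriv (hF : ContDiff ℝ 2 F) : Differentiable ℝ (dirDeriv w F) :=
  ((hF.fderiv_right (m := 1) le_rfl).clm_apply contDiff_const).differentiable one_ne_zero

theorem dirDeriv_const (c : ℝ) : dirDeriv w (fun _ => c) p = 0 := by
  simp [dirDeriv]

theorem dirDeriv_add (hF : DifferentiableAt ℝ F p) (hG : DifferentiableAt ℝ G p) :
    dirDeriv w (fun q => F q + G q) p = dirDeriv w F p + dirDeriv w G p := by
  simp [dirDeriv, fderiv_fun_add hF hG]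

theorem dirDeriv_sub (hF : DifferentiableAt ℝ F p) (hG : DifferentiableAt ℝ G p) :
    dirDeriv w (fun q => F q - G q) p = dirDeriv w F p - dirDeriv w G p := by
  simp [dirDeriv, fderiv_fun_sub hF hG]

theorem dirDeriv_mul (hF : DifferentiableAt ℝ F p) (hG : DifferentiableAt ℝ G p) :
    dirDeriv w (fun q => F q * G q) p = dirDeriv w F p * G p + F p * dirDeriv w G p := by
  simp only [dirDeriv, fderiv_fun_mul hF hG, add_apply, smul_apply, smul_eq_mul]
  ring

theorem dirDeriv_div (hF : DifferentiableAt ℝ F p) (hG : DifferentiableAt ℝ G p)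
    (hGp : G p ≠ 0) :
    dirDeriv w (fun q => F q / G q) p
      = (dirDeriv w F p * G p - F p * dirDeriv w G p) / G p ^ 2 := by
  have h : HasFDerivAt (fun q => F q * (G q)⁻¹) _ p :=
    hF.hasFDerivAt.mul ((hasFDerivAt_inv hGp).comp p hG.hasFDerivAt)
  simp only [dirDeriv, div_eq_mul_inv, h.fderiv, add_apply, smul_apply,
    ContinuousLinearMap.comp_apply, ContinuousLinearMap.toSpanSingleton_apply, smul_eq_mul]
  field_simp
  ring

end DirectionalDerivative

end ShallowWater

open ShallowWater

local notation "ℝ³" => ℝ × ℝ × ℝ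
local notation "∂t" => dirDeriv ((1, 0, 0) : ℝ³)
local notation "∂x" => dirDeriv ((0, 1, 0) : ℝ³)
local notation "∂y" => dirDeriv ((0, 0, 1) : ℝ³)

namespace ShallowWater

def uncurry3 (u : ℝ → ℝ → ℝ → ℝ) (p : ℝ³) : ℝ := u p.1 p.2.1 p.2.2

section Slices

variable {u : ℝ → ℝ → ℝ → ℝ} {t x y : ℝ}

theorem deriv_slice_t (hu : DifferentiableAt ℝ (uncurry3 u) (t, x, y)) :
    deriv (fun s => u s x y) t = ∂t (uncurry3 u) (t, x, y) := by
  have := hu.hasFDerivAt.comp_hasDerivAt t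
    ((hasDerivAt_id t).prodMk ((hasDerivAt_const t x).prodMk (hasDerivAt_const t y)))
  exact this.deriv

theorem deriv_slice_x (hu : DifferentiableAt ℝ (uncurry3 u) (t, x, y)) :
    deriv (fun s => u t s y) x = ∂x (uncurry3 u) (t, x, y) := by
  have := hu.hasFDerivAt.comp_hasDerivAt x
    ((hasDerivAt_const x t).prodMk ((hasDerivAt_id x).prodMk (hasDerivAt_const x y)))
  exact this.deriv

theorem deriv_slice_y (hu : DifferentiableAt ℝ (uncurry3 u) (t, x, y)) :
    deriv (fun s => u t x s) y = ∂y (uncurry3 u) (t, x, y) := by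
  have := hu.hasFDerivAt.comp_hasDerivAt y
    ((hasDerivAt_const y t).prodMk ((hasDerivAt_const y x).prodMk (hasDerivAt_id y)))
  exact this.deriv

end Slices

noncomputable def materialDeriv (U V F : ℝ³ → ℝ) : ℝ³ → ℝ :=
  fun p => ∂t F p + U p * ∂x F p + V p * ∂y F p

noncomputable def divergence (U V : ℝ³ → ℝ) : ℝ³ → ℝ :=
  fun p => ∂x U p + ∂y V p

noncomputable def absoluteVorticity (f : ℝ) (U V : ℝ³ → ℝ) : ℝ³ → ℝ :=
  fun p => ∂x V p - ∂y U p + f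

noncomputable def potentialVorticity (f : ℝ) (U V H : ℝ³ → ℝ) : ℝ³ → ℝ :=
  fun p => absoluteVorticity f U V p / H p

section Flow

variable {U V H : ℝ³ → ℝ} {f g : ℝ} {p : ℝ³}

theorem differentiable_absoluteVorticity (hU : ContDiff ℝ 2 U) (hV : ContDiff ℝ 2 V) :
    Differentiable ℝ (absoluteVorticity f U V) := by
  unfold absoluteVorticity
  fun_prop

theorem differentiable_potentialVorticity (hU : ContDiff ℝ 2 U) (hV : ContDiff ℝ 2 V)
    (hH : Differentiable ℝ H) (hH₀ : ∀ p, H p ≠ 0) :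
    Differentiable ℝ (potentialVorticity f U V H) := by
  have := differentiable_absoluteVorticity (f := f) hU hV
  unfold potentialVorticity
  simp only [div_eq_mul_inv]
  fun_prop (disch := exact hH₀ _)

theorem materialDeriv_div {F G : ℝ³ → ℝ} (hF : DifferentiableAt ℝ F p)
    (hG : DifferentiableAt ℝ G p) (hGp : G p ≠ 0) :
    materialDeriv U V (fun q => F q / G q) p
      = (materialDeriv U V F p * G p - F p * materialDeriv U V G p) / G p ^ 2 := by
  simp only [materialDeriv, dirDeriv_div _ hF hG hGp]
  field_simp
  ring

theorem materialDeriv_eq_neg_mul_divergence_of_continuity (hU : DifferentiableAt ℝ U p)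
    (hV : DifferentiableAt ℝ V p) (hH : DifferentiableAt ℝ H p)
    (continuity : ∂t H p + ∂x (fun q => U q * H q) p + ∂y (fun q => V q * H q) p = 0) :
    materialDeriv U V H p = -H p * divergence U V p := by
  rw [dirDeriv_mul _ hU hH, dirDeriv_mul _ hV hH] at continuity
  unfold materialDeriv divergence
  linear_combination continuity

theorem materialDeriv_absoluteVorticity
    (hU : ContDiff ℝ 2 U) (hV : ContDiff ℝ 2 V) (hH : ContDiff ℝ 2 H)
    (momentum_x : ∀ p, materialDeriv U V U p - f * V p + g * ∂x H p = 0)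
    (momentum_y : ∀ p, materialDeriv U V V p + f * U p + g * ∂y H p = 0) :
    materialDeriv U V (absoluteVorticity f U V) p
      = -absoluteVorticity f U V p * divergence U V p := by
  have dy : ∂y (fun q => materialDeriv U V U q - f * V q + g * ∂x H q) p = 0 := by
    rw [funext momentum_x, dirDeriv_const]
  have dx : ∂x (fun q => materialDeriv U V V q + f * U q + g * ∂y H q) p = 0 := by
    rw [funext momentum_y, dirDeriv_const]
  have := hU.differentiable two_ne_zero
  have := hV.differentiable two_ne_zero
  have := hH.differentiable two_ne_zero
  unfold materialDeriv at dx dy ⊢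
  unfold absoluteVorticity divergence
  simp (disch := fun_prop) only [dirDeriv_add, dirDeriv_sub, dirDeriv_mul, dirDeriv_const]
    at dx dy ⊢
  simp only [dirDeriv_comm hU (0, 0, 1) (1, 0, 0), dirDeriv_comm hU (0, 0, 1) (0, 1, 0),
    dirDeriv_comm hV (0, 1, 0) (1, 0, 0), dirDeriv_comm hV (0, 1, 0) (0, 0, 1),
    dirDeriv_comm hH (0, 1, 0) (0, 0, 1)] at dx dy ⊢
  linear_combination dx - dy

theorem materialDeriv_potentialVorticity
    (hU : ContDiff ℝ 2 U) (hV : ContDiff ℝ 2 V) (hH : ContDiff ℝ 2 H) (hHp : H p ≠ 0)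
    (momentum_x : ∀ p, materialDeriv U V U p - f * V p + g * ∂x H p = 0)
    (momentum_y : ∀ p, materialDeriv U V V p + f * U p + g * ∂y H p = 0)
    (continuity : ∂t H p + ∂x (fun q => U q * H q) p + ∂y (fun q => V q * H q) p = 0) :
    materialDeriv U V (potentialVorticity f U V H) p = 0 := by
  have hUd := hU.differentiable two_ne_zero
  have hVd := hV.differentiable two_ne_zero
  have hHd := hH.differentiable two_ne_zero
  unfold potentialVorticity
  rw [materialDeriv_div (differentiable_absoluteVorticity hU hV).differentiableAt
      hHd.differentiableAt hHp,
    materialDeriv_absoluteVorticity hU hV hH momentum_x momentum_y,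
    materialDeriv_eq_neg_mul_divergence_of_continuity hUd.differentiableAt hVd.differentiableAt
      hHd.differentiableAt continuity]
  ring

end Flow

end ShallowWater

/-- Potential vorticity Ω = (v_x − u_y + f)/h is transported by the flow
for solutions of the rotating shallow water equations. -/
theorem potential_vorticity_transport
    (f g : ℝ) (u v h Ω : ℝ → ℝ → ℝ → ℝ)
    (hu : ContDiff ℝ 2 fun p : ℝ × ℝ × ℝ => u p.1 p.2.1 p.2.2)
    (hv : ContDiff ℝ 2 fun p : ℝ × ℝ × ℝ => v p.1 p.2.1 p.2.2)
    (hh : ContDiff ℝ 2 fun p : ℝ × ℝ × ℝ => h p.1 p.2.1 p.2.2)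
    (hne : ∀ t x y, h t x y ≠ 0)
    (e1 : ∀ t x y, deriv (fun s => u s x y) t
        + u t x y * deriv (fun s => u t s y) x
        + v t x y * deriv (fun s => u t x s) y
        - f * v t x y + g * deriv (fun s => h t s y) x = 0)
    (e2 : ∀ t x y, deriv (fun s => v s x y) t
        + u t x y * deriv (fun s => v t s y) x
        + v t x y * deriv (fun s => v t x s) y
        + f * u t x y + g * deriv (fun s => h t x s) y = 0)
    (e3 : ∀ t x y, deriv (fun s => h s x y) t
        + deriv (fun s => u t s y * h t s y) x
        + deriv (fun s => v t x s * h t x s) y = 0)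
    (hΩ : Ω = fun t x y =>
        (deriv (fun s => v t s y) x - deriv (fun s => u t x s) y + f) / h t x y) :
    ∀ t x y, deriv (fun s => Ω s x y) t
        + u t x y * deriv (fun s => Ω t s y) x
        + v t x y * deriv (fun s => Ω t x s) y = 0 := by
  have hU : ContDiff ℝ 2 (uncurry3 u) := hu
  have hV : ContDiff ℝ 2 (uncurry3 v) := hv
  have hH : ContDiff ℝ 2 (uncurry3 h) := hh
  have hUd := hU.differentiable two_ne_zero
  have hVd := hV.differentiable two_ne_zero
  have hHd := hH.differentiable two_ne_zero
  simp (disch := fun_prop) only [deriv_slice_t, deriv_slice_x, deriv_slice_y,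
    deriv_slice_x (u := fun t x y => u t x y * h t x y) (hUd.mul hHd).differentiableAt,
    deriv_slice_y (u := fun t x y => v t x y * h t x y) (hVd.mul hHd).differentiableAt]
    at e1 e2 e3 hΩ
  have hΩ' : uncurry3 Ω = potentialVorticity f (uncurry3 u) (uncurry3 v) (uncurry3 h) := by
    rw [hΩ]
    rfl
  have hΩd : Differentiable ℝ (uncurry3 Ω) :=
    hΩ' ▸ differentiable_potentialVorticity hU hV hHd fun p => hne p.1 p.2.1 p.2.2
  intro t x y
  rw [deriv_slice_t (hΩd _), deriv_slice_x (hΩd _), deriv_slice_y (hΩd _), hΩ']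
  exact materialDeriv_potentialVorticity hU hV hH (hne t x y)
    (fun p => e1 p.1 p.2.1 p.2.2) (fun p => e2 p.1 p.2.1 p.2.2) (e3 t x y)
end

section
/- Let f > 0 and h₀ be real constants. Define for all t ∈ ℝ and (x, y) ∈ ℝ² (using polar radius r = √(x²+y²)): U(t,r) = f²·t·r/(1 + f²t²), V(t,r) = f·r/(1 + f²t²), h(t,r) = h₀/(1 + f²t²). Then the corresponding Cartesian velocity field u = (U·x − V·y)/r, v = (U·y + V·x)/r (extended by u = v = 0 at r = 0) together with this h satisfies the non-rotating shallow water equations u_t + u·u_x + v·u_y + g·h_x = 0, v_t + u·v_x + v·v_y + g·h_y = 0, h_t + (u·h)_x + (v·h)_y = 0. -/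
/-!
A velocity field linear in position, `u = α x - β y`, `v = α y + β x`, over a depth `η` that
depends on time only, solves the shallow water equations whenever `α' = β² - α²`, `β' = -2αβ` and
`η' = -2αη`; the pressure term drops out. The first two equations say `w' = -w²` for
`w = α + iβ`, solved by `w = 1 / (t - i/f)`, i.e. `α = f²t/(1+f²t²)`, `β = f/(1+f²t²)`, and then
`η = h₀/(1+f²t²)` solves the third. The profiles `U = α r`, `V = β r` are this field in polar
form, so the Cartesian field is `α x - β y`, `α y + β x` everywhere, including the origin.
-/

def IsShallowWaterSolution (g : ℝ) (u v h : ℝ → ℝ → ℝ → ℝ) : Prop :=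
  ∀ t x y : ℝ,
    (deriv (fun s => u s x y) t
      + u t x y * deriv (fun s => u t s y) x
      + v t x y * deriv (fun s => u t x s) y
      + g * deriv (fun s => h t s y) x = 0) ∧
    (deriv (fun s => v s x y) t
      + u t x y * deriv (fun s => v t s y) x
      + v t x y * deriv (fun s => v t x s) y
      + g * deriv (fun s => h t x s) y = 0) ∧
    (deriv (fun s => h s x y) t
      + deriv (fun s => u t s y * h t s y) x
      + deriv (fun s => v t x s * h t x s) y = 0)

theorem isShallowWaterSolution_of_linear {α β η : ℝ → ℝ}
    (hα : ∀ t, HasDerivAt α (β t ^ 2 - α t ^ 2) t)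
    (hβ : ∀ t, HasDerivAt β (-2 * α t * β t) t)
    (hη : ∀ t, HasDerivAt η (-2 * α t * η t) t) (g : ℝ) :
    IsShallowWaterSolution g (fun t x y => α t * x - β t * y) (fun t x y => α t * y + β t * x)
      (fun t _ _ => η t) := by
  intro t x y
  have hut : HasDerivAt (fun s => α s * x - β s * y) _ t :=
    ((hα t).mul_const x).sub ((hβ t).mul_const y)
  have hvt : HasDerivAt (fun s => α s * y + β s * x) _ t :=
    ((hα t).mul_const y).add ((hβ t).mul_const x)
  simp only [hut.deriv, hvt.deriv, (hη t).deriv]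
  refine ⟨?_, ?_, ?_⟩ <;>
    simp only [deriv_const_mul_id', deriv_sub_const_fun, deriv_const_sub', deriv_add_const',
      deriv_const_add', deriv_mul_const_field', deriv_const', mul_zero, add_zero] <;>
    ring

section Riccati

variable (f t : ℝ)

theorem hasDerivAt_one_add_sq_mul_sq :
    HasDerivAt (fun s => 1 + f ^ 2 * s ^ 2) (f ^ 2 * (2 * t)) t := by
  simpa using ((hasDerivAt_pow 2 t).const_mul (f ^ 2)).const_add 1

theorem hasDerivAt_mul_div_one_add_sq_mul_sq :
    HasDerivAt (fun s => f ^ 2 * s / (1 + f ^ 2 * s ^ 2))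
      ((f / (1 + f ^ 2 * t ^ 2)) ^ 2 - (f ^ 2 * t / (1 + f ^ 2 * t ^ 2)) ^ 2) t := by
  have hD : 1 + f ^ 2 * t ^ 2 ≠ 0 := by positivity
  refine (((hasDerivAt_id' t).const_mul (f ^ 2)).div (hasDerivAt_one_add_sq_mul_sq f t)
    hD).congr_deriv ?_
  field_simp
  ring

theorem hasDerivAt_const_div_one_add_sq_mul_sq (c : ℝ) :
    HasDerivAt (fun s => c / (1 + f ^ 2 * s ^ 2))
      (-2 * (f ^ 2 * t / (1 + f ^ 2 * t ^ 2)) * (c / (1 + f ^ 2 * t ^ 2))) t := by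
  have hD : 1 + f ^ 2 * t ^ 2 ≠ 0 := by positivity
  refine ((hasDerivAt_const t c).div (hasDerivAt_one_add_sq_mul_sq f t) hD).congr_deriv ?_
  field_simp
  ring

end Riccati

theorem ite_div_sqrt_eq {x y p N : ℝ} (hN : N = √(x ^ 2 + y ^ 2) * p)
    (h0 : x = 0 ∧ y = 0 → p = 0) :
    (if x = 0 ∧ y = 0 then 0 else N / √(x ^ 2 + y ^ 2)) = p := by
  split_ifs with hxy
  · exact (h0 hxy).symm
  · have hr : √(x ^ 2 + y ^ 2) ≠ 0 := by
      refine Real.sqrt_ne_zero'.mpr ?_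
      contrapose! hxy
      constructor <;> nlinarith [sq_nonneg x, sq_nonneg y]
    rw [hN, mul_div_cancel_left₀ _ hr]

theorem sw_solution_from_rest_state_general
    (f g h₀ : ℝ)
    (U V : ℝ → ℝ → ℝ) (u v h : ℝ → ℝ → ℝ → ℝ)
    (hU : U = fun t r => f ^ 2 * t * r / (1 + f ^ 2 * t ^ 2))
    (hV : V = fun t r => f * r / (1 + f ^ 2 * t ^ 2))
    (hu : u = fun t x y =>
        if x = 0 ∧ y = 0 then 0 else
          (U t (Real.sqrt (x ^ 2 + y ^ 2)) * x - V t (Real.sqrt (x ^ 2 + y ^ 2)) * y)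
            / Real.sqrt (x ^ 2 + y ^ 2))
    (hv : v = fun t x y =>
        if x = 0 ∧ y = 0 then 0 else
          (U t (Real.sqrt (x ^ 2 + y ^ 2)) * y + V t (Real.sqrt (x ^ 2 + y ^ 2)) * x)
            / Real.sqrt (x ^ 2 + y ^ 2))
    (hh : h = fun t _x _y => h₀ / (1 + f ^ 2 * t ^ 2)) :
    ∀ t x y : ℝ,
      (deriv (fun s => u s x y) t
        + u t x y * deriv (fun s => u t s y) x
        + v t x y * deriv (fun s => u t x s) y
        + g * deriv (fun s => h t s y) x = 0) ∧
      (deriv (fun s => v s x y) t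
        + u t x y * deriv (fun s => v t s y) x
        + v t x y * deriv (fun s => v t x s) y
        + g * deriv (fun s => h t x s) y = 0) ∧
      (deriv (fun s => h s x y) t
        + deriv (fun s => u t s y * h t s y) x
        + deriv (fun s => v t x s * h t x s) y = 0) := by
  set α : ℝ → ℝ := fun t => f ^ 2 * t / (1 + f ^ 2 * t ^ 2)
  set β : ℝ → ℝ := fun t => f / (1 + f ^ 2 * t ^ 2)
  have hu_lin : u = fun t x y => α t * x - β t * y := by
    subst hu hU hV
    funext t x y
    exact ite_div_sqrt_eq (by ring) (by rintro ⟨rfl, rfl⟩; ring)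
  have hv_lin : v = fun t x y => α t * y + β t * x := by
    subst hv hU hV
    funext t x y
    exact ite_div_sqrt_eq (by ring) (by rintro ⟨rfl, rfl⟩; ring)
  subst hu_lin hv_lin hh
  exact isShallowWaterSolution_of_linear (hasDerivAt_mul_div_one_add_sq_mul_sq f)
    (hasDerivAt_const_div_one_add_sq_mul_sq f · f)
    (hasDerivAt_const_div_one_add_sq_mul_sq f · h₀) g

/-- The rotationally-symmetric fields U = f²tr/(1+f²t²), V = fr/(1+f²t²),
h = h₀/(1+f²t²), written in Cartesian coordinates (extended by zero velocity
at the origin), satisfy the non-rotating shallow water equations. -/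
theorem sw_solution_from_rest_state
    (f g h₀ : ℝ) (hf : 0 < f)
    (U V : ℝ → ℝ → ℝ) (u v h : ℝ → ℝ → ℝ → ℝ)
    (hU : U = fun t r => f ^ 2 * t * r / (1 + f ^ 2 * t ^ 2))
    (hV : V = fun t r => f * r / (1 + f ^ 2 * t ^ 2))
    (hu : u = fun t x y =>
        if x = 0 ∧ y = 0 then 0 else
          (U t (Real.sqrt (x ^ 2 + y ^ 2)) * x - V t (Real.sqrt (x ^ 2 + y ^ 2)) * y)
            / Real.sqrt (x ^ 2 + y ^ 2))
    (hv : v = fun t x y =>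
        if x = 0 ∧ y = 0 then 0 else
          (U t (Real.sqrt (x ^ 2 + y ^ 2)) * y + V t (Real.sqrt (x ^ 2 + y ^ 2)) * x)
            / Real.sqrt (x ^ 2 + y ^ 2))
    (hh : h = fun t _x _y => h₀ / (1 + f ^ 2 * t ^ 2)) :
    ∀ t x y : ℝ,
      (deriv (fun s => u s x y) t
        + u t x y * deriv (fun s => u t s y) x
        + v t x y * deriv (fun s => u t x s) y
        + g * deriv (fun s => h t s y) x = 0) ∧
      (deriv (fun s => v s x y) t
        + u t x y * deriv (fun s => v t s y) x
        + v t x y * deriv (fun s => v t x s) y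
        + g * deriv (fun s => h t x s) y = 0) ∧
      (deriv (fun s => h s x y) t
        + deriv (fun s => u t s y * h t s y) x
        + deriv (fun s => v t x s * h t x s) y = 0) :=
  sw_solution_from_rest_state_general f g h₀ U V u v h hU hV hu hv hh
end

section
/- Let f > 0, α > 0, h₀ > 0 be constants and set τ(t) = tan(ft/2). Define, for t not an odd multiple of π/f, the rotationally symmetric fields U(t,r) = (f r/2)·(α² − 1)·τ/(1 + α²τ²), V(t,r) = −(f r/2)·(α − 1)(ατ² − 1)/(1 + α²τ²), h(t,r) = α(1 + τ²)h₀/(1 + α²τ²). Then (U, V, h) satisfies the rotating shallow water equations in polar form: U_t + U·U_r − V²/r − f·V + g·h_r = 0, V_t + U·V_r + U·V/r + f·U = 0, h_t + (1/r)(r·U·h)_r = 0, for all r > 0. -/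
/-!
Both velocity components are linear in `r` and the depth does not depend on `r`. For such fields
the polar equations reduce to ordinary differential equations for the coefficients
`u = U / r`, `v = V / r` and `h`:
`u' + u² - v² - f v = 0`, `v' + 2 u v + f u = 0`, `h' + 2 u h = 0`.
These coefficients are rational functions of `τ = tan (f t / 2)`, and `τ' = (f / 2) (1 + τ²)`,
so each ODE becomes a rational identity in `τ`.
-/

open Real

section LinearAnsatz

variable {f g : ℝ} {u v η : ℝ → ℝ} {U V h : ℝ → ℝ → ℝ} {t r : ℝ}

theorem deriv_mul_self_mul_const (a b x : ℝ) :
    deriv (fun s => s * (s * a) * b) x = 2 * x * a * b := by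
  have : HasDerivAt (fun s => s * (s * a) * b) ((1 * (x * a) + x * (1 * a)) * b) x :=
    ((hasDerivAt_id x).mul ((hasDerivAt_id x).mul_const a)).mul_const b
  rw [this.deriv]; ring

theorem rotatingShallowWater_of_linear_ansatz (hU : U = fun t r => r * u t)
    (hV : V = fun t r => r * v t) (hh : h = fun t _ => η t)
    (hu : deriv u t + u t ^ 2 - v t ^ 2 - f * v t = 0)
    (hv : deriv v t + 2 * u t * v t + f * u t = 0)
    (hη : deriv η t + 2 * u t * η t = 0) (hr : r ≠ 0) :
    (deriv (fun s => U s r) t + U t r * deriv (fun s => U t s) r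
        - (V t r) ^ 2 / r - f * V t r + g * deriv (fun s => h t s) r = 0) ∧
      (deriv (fun s => V s r) t + U t r * deriv (fun s => V t s) r
        + U t r * V t r / r + f * U t r = 0) ∧
      (deriv (fun s => h s r) t
        + (1 / r) * deriv (fun s => s * U t s * h t s) r = 0) := by
  subst hU hV hh
  simp only [deriv_const_mul_field', deriv_mul_const_field', deriv_id'', deriv_const,
    deriv_mul_self_mul_const]
  refine ⟨?_, ?_, ?_⟩ <;> field_simp
  · linear_combination r * hu
  · linear_combination r * hv
  · linear_combination hη

end LinearAnsatz

theorem cos_mul_div_two_ne_zero {f t : ℝ} (ht : ∀ k : ℤ, t ≠ (2 * (k : ℝ) + 1) * π / f) :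
    cos (f * t / 2) ≠ 0 := by
  intro hcos
  obtain ⟨k, hk⟩ := cos_eq_zero_iff.1 hcos
  have hodd : (2 * (k : ℝ) + 1) ≠ 0 := by exact_mod_cast (by omega : 2 * k + 1 ≠ 0)
  have hft : f * t = (2 * k + 1) * π := by linarith
  have hf : f ≠ 0 := by
    rintro rfl
    exact mul_ne_zero hodd pi_ne_zero (by simpa using hft.symm)
  exact ht k (by field_simp; linarith)

theorem hasDerivAt_tan_mul_div_two {f t : ℝ} (h : cos (f * t / 2) ≠ 0) :
    HasDerivAt (fun s => tan (f * s / 2)) (f / 2 * (1 + tan (f * t / 2) ^ 2)) t := by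
  have hlin : HasDerivAt (fun s : ℝ => f * s / 2) (f / 2) t := by
    simpa using ((hasDerivAt_id t).const_mul f).div_const 2
  refine ((hasDerivAt_tan h).comp t hlin).congr_deriv ?_
  rw [← inv_one_add_tan_sq h, one_div, inv_inv]
  ring

noncomputable section Pulsation

variable (f α h₀ : ℝ)

def pulsationU (x : ℝ) : ℝ := f / 2 * ((α ^ 2 - 1) * x) / (1 + α ^ 2 * x ^ 2)

def pulsationV (x : ℝ) : ℝ := -(f / 2) * ((α - 1) * (α * x ^ 2 - 1)) / (1 + α ^ 2 * x ^ 2)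

def pulsationDepth (x : ℝ) : ℝ := α * (1 + x ^ 2) * h₀ / (1 + α ^ 2 * x ^ 2)

variable {f α h₀} {τ : ℝ → ℝ} {t : ℝ}

theorem HasDerivAt.div_one_add_sq_mul_sq {N : ℝ → ℝ} {N' τ' : ℝ} (hN : HasDerivAt N N' t)
    (hτ : HasDerivAt τ τ' t) :
    HasDerivAt (fun s => N s / (1 + α ^ 2 * τ s ^ 2))
      ((N' * (1 + α ^ 2 * τ t ^ 2) - N t * (α ^ 2 * (2 * τ t * τ'))) / (1 + α ^ 2 * τ t ^ 2) ^ 2)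
      t := by
  have hD := ((hτ.fun_pow 2).const_mul (α ^ 2)).const_add 1
  refine hN.div (hD.congr_deriv ?_) (by positivity)
  push_cast
  ring

theorem pulsation_radial_ode (hτ : HasDerivAt τ (f / 2 * (1 + τ t ^ 2)) t) :
    deriv (fun s => pulsationU f α (τ s)) t + pulsationU f α (τ t) ^ 2
      - pulsationV f α (τ t) ^ 2 - f * pulsationV f α (τ t) = 0 := by
  have hN := (hτ.const_mul (α ^ 2 - 1)).const_mul (f / 2)
  unfold pulsationU pulsationV
  rw [(hN.div_one_add_sq_mul_sq hτ).deriv]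
  have hD : 1 + α ^ 2 * τ t ^ 2 ≠ 0 := by positivity
  field_simp
  ring

theorem pulsation_azimuthal_ode (hτ : HasDerivAt τ (f / 2 * (1 + τ t ^ 2)) t) :
    deriv (fun s => pulsationV f α (τ s)) t
      + 2 * pulsationU f α (τ t) * pulsationV f α (τ t) + f * pulsationU f α (τ t) = 0 := by
  have hN := ((((hτ.fun_pow 2).const_mul α).sub_const 1).const_mul (α - 1)).const_mul (-(f / 2))
  unfold pulsationU pulsationV
  rw [(hN.div_one_add_sq_mul_sq hτ).deriv]
  have hD : 1 + α ^ 2 * τ t ^ 2 ≠ 0 := by positivity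
  field_simp
  ring

theorem pulsation_mass_ode (hτ : HasDerivAt τ (f / 2 * (1 + τ t ^ 2)) t) :
    deriv (fun s => pulsationDepth α h₀ (τ s)) t
      + 2 * pulsationU f α (τ t) * pulsationDepth α h₀ (τ t) = 0 := by
  have hN := (((hτ.fun_pow 2).const_add 1).const_mul α).mul_const h₀
  unfold pulsationU pulsationDepth
  rw [(hN.div_one_add_sq_mul_sq hτ).deriv]
  have hD : 1 + α ^ 2 * τ t ^ 2 ≠ 0 := by positivity
  field_simp
  ring

end Pulsation

theorem periodic_pulsation_solution_general
    (f g α h₀ : ℝ)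
    (τ : ℝ → ℝ) (U V h : ℝ → ℝ → ℝ)
    (hτ : τ = fun t => Real.tan (f * t / 2))
    (hU : U = fun t r => (f * r / 2) * ((α ^ 2 - 1) * τ t) / (1 + α ^ 2 * (τ t) ^ 2))
    (hV : V = fun t r => -(f * r / 2) * ((α - 1) * (α * (τ t) ^ 2 - 1)) / (1 + α ^ 2 * (τ t) ^ 2))
    (hh : h = fun t _r => α * (1 + (τ t) ^ 2) * h₀ / (1 + α ^ 2 * (τ t) ^ 2)) :
    ∀ t : ℝ, (∀ k : ℤ, t ≠ (2 * (k : ℝ) + 1) * Real.pi / f) → ∀ r : ℝ, 0 < r →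
      (deriv (fun s => U s r) t + U t r * deriv (fun s => U t s) r
        - (V t r) ^ 2 / r - f * V t r + g * deriv (fun s => h t s) r = 0) ∧
      (deriv (fun s => V s r) t + U t r * deriv (fun s => V t s) r
        + U t r * V t r / r + f * U t r = 0) ∧
      (deriv (fun s => h s r) t
        + (1 / r) * deriv (fun s => s * U t s * h t s) r = 0) := by
  intro t ht r hr
  have hτt : HasDerivAt τ (f / 2 * (1 + τ t ^ 2)) t := by
    rw [hτ]
    exact hasDerivAt_tan_mul_div_two (cos_mul_div_two_ne_zero ht)
  have hU' : U = fun t r => r * pulsationU f α (τ t) := by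
    rw [hU]; funext t r; unfold pulsationU; ring
  have hV' : V = fun t r => r * pulsationV f α (τ t) := by
    rw [hV]; funext t r; unfold pulsationV; ring
  have hh' : h = fun t _ => pulsationDepth α h₀ (τ t) := hh
  exact rotatingShallowWater_of_linear_ansatz hU' hV' hh' (pulsation_radial_ode hτt)
    (pulsation_azimuthal_ode hτt) (pulsation_mass_ode hτt) hr.ne'

/-- The time-periodic pulsation fields satisfy the rotationally symmetric
rotating shallow water equations in polar form, away from odd multiples of π/f. -/
theorem periodic_pulsation_solution
    (f g α h₀ : ℝ) (hf : 0 < f) (hg : 0 < g) (hα : 0 < α) (hh₀ : 0 < h₀)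
    (τ : ℝ → ℝ) (U V h : ℝ → ℝ → ℝ)
    (hτ : τ = fun t => Real.tan (f * t / 2))
    (hU : U = fun t r => (f * r / 2) * ((α ^ 2 - 1) * τ t) / (1 + α ^ 2 * (τ t) ^ 2))
    (hV : V = fun t r => -(f * r / 2) * ((α - 1) * (α * (τ t) ^ 2 - 1)) / (1 + α ^ 2 * (τ t) ^ 2))
    (hh : h = fun t _r => α * (1 + (τ t) ^ 2) * h₀ / (1 + α ^ 2 * (τ t) ^ 2)) :
    ∀ t : ℝ, (∀ k : ℤ, t ≠ (2 * (k : ℝ) + 1) * Real.pi / f) → ∀ r : ℝ, 0 < r →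
      (deriv (fun s => U s r) t + U t r * deriv (fun s => U t s) r
        - (V t r) ^ 2 / r - f * V t r + g * deriv (fun s => h t s) r = 0) ∧
      (deriv (fun s => V s r) t + U t r * deriv (fun s => V t s) r
        + U t r * V t r / r + f * U t r = 0) ∧
      (deriv (fun s => h s r) t
        + (1 / r) * deriv (fun s => s * U t s * h t s) r = 0) :=
  periodic_pulsation_solution_general f g α h₀ τ U V h hτ hU hV hh
end

section
/- Let α > 0, r₀ > 0, θ₀ ∈ ℝ, and define x(t) = r(t)cos(θ(t)), y(t) = r(t)sin(θ(t)) where r(t) = r₀·√((1+α²τ²)/(1+τ²)) and θ(t) = θ₀ + arctan(ατ) − arctan(τ) with τ = tan(ft/2). Then for all t ∈ (−π/f, π/f), (x(t) − A)² + (y(t) − B)² = R², where A = ((α+1)/2)·r₀·cos θ₀, B = ((α+1)/2)·r₀·sin θ₀, and R = ((α−1)/2)·r₀. That is, each fluid particle of the pulsating-cylinder solution moves on a circle of radius |α−1|·r₀/2. -/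
/-!
Write `τ = tan (f t / 2)`. The point `r (cos (θ - θ₀), sin (θ - θ₀)) / r₀` is the complex number
`(1 + iατ) / (1 + iτ) = ((1 + ατ²) + i(α - 1)τ) / (1 + τ²)`, and this Möbius image of the real line
is the circle of centre `(α + 1) / 2` and radius `|α - 1| / 2`. Rotating by `θ₀` and scaling by
`r₀` gives the trajectory's circle.
-/

open Real

lemma sqrt_mul_cos_arctan_sub_arctan (α s : ℝ) :
    √((1 + α ^ 2 * s ^ 2) / (1 + s ^ 2)) * cos (arctan (α * s) - arctan s)
      = (1 + α * s ^ 2) / (1 + s ^ 2) := by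
  have hs : √(1 + s ^ 2) ^ 2 = 1 + s ^ 2 := sq_sqrt (by positivity)
  have : (0 : ℝ) < √(1 + s ^ 2) := sqrt_pos.2 (by positivity)
  have : (0 : ℝ) < √(1 + (α * s) ^ 2) := sqrt_pos.2 (by positivity)
  rw [← mul_pow, sqrt_div (by positivity), cos_sub, cos_arctan, sin_arctan, cos_arctan,
    sin_arctan]
  field_simp
  linear_combination (-(1 + α * s ^ 2)) * hs

lemma sqrt_mul_sin_arctan_sub_arctan (α s : ℝ) :
    √((1 + α ^ 2 * s ^ 2) / (1 + s ^ 2)) * sin (arctan (α * s) - arctan s)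
      = (α - 1) * s / (1 + s ^ 2) := by
  have hs : √(1 + s ^ 2) ^ 2 = 1 + s ^ 2 := sq_sqrt (by positivity)
  have : (0 : ℝ) < √(1 + s ^ 2) := sqrt_pos.2 (by positivity)
  have : (0 : ℝ) < √(1 + (α * s) ^ 2) := sqrt_pos.2 (by positivity)
  rw [← mul_pow, sqrt_div (by positivity), sin_sub, cos_arctan, sin_arctan, cos_arctan,
    sin_arctan]
  field_simp
  linear_combination (-s * (α - 1)) * hs

lemma mobius_real_line_on_circle (α s : ℝ) :
    ((1 + α * s ^ 2) / (1 + s ^ 2) - (α + 1) / 2) ^ 2 + ((α - 1) * s / (1 + s ^ 2)) ^ 2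
      = ((α - 1) / 2) ^ 2 := by
  have : (0 : ℝ) < 1 + s ^ 2 := by positivity
  field_simp
  ring

lemma dist_sq_polar_rotate (ρ ρ₀ φ ψ : ℝ) :
    (ρ * cos (φ + ψ) - ρ₀ * cos φ) ^ 2 + (ρ * sin (φ + ψ) - ρ₀ * sin φ) ^ 2
      = (ρ * cos ψ - ρ₀) ^ 2 + (ρ * sin ψ) ^ 2 := by
  rw [cos_add, sin_add]
  linear_combination ((ρ * cos ψ - ρ₀) ^ 2 + (ρ * sin ψ) ^ 2) * sin_sq_add_cos_sq φ

theorem pulsating_cylinder_circular_trajectories_general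
    (f α r₀ θ₀ : ℝ)
    (τ r θ x y : ℝ → ℝ) (A B R : ℝ)
    (hτ : τ = fun t => Real.tan (f * t / 2))
    (hr : r = fun t => r₀ * Real.sqrt ((1 + α ^ 2 * (τ t) ^ 2) / (1 + (τ t) ^ 2)))
    (hθ : θ = fun t => θ₀ + Real.arctan (α * τ t) - Real.arctan (τ t))
    (hx : x = fun t => r t * Real.cos (θ t))
    (hy : y = fun t => r t * Real.sin (θ t))
    (hA : A = ((α + 1) / 2) * r₀ * Real.cos θ₀)
    (hB : B = ((α + 1) / 2) * r₀ * Real.sin θ₀)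
    (hR : R = ((α - 1) / 2) * r₀) :
    ∀ t ∈ Set.Ioo (-(Real.pi / f)) (Real.pi / f),
      (x t - A) ^ 2 + (y t - B) ^ 2 = R ^ 2 := by
  intro t _
  subst hτ hr hθ hx hy hA hB hR
  beta_reduce
  set s := tan (f * t / 2)
  rw [add_sub_assoc, dist_sq_polar_rotate, mul_assoc, mul_assoc,
    sqrt_mul_cos_arctan_sub_arctan, sqrt_mul_sin_arctan_sub_arctan]
  linear_combination r₀ ^ 2 * mobius_real_line_on_circle α s

/-- Each fluid particle of the pulsating-cylinder solution moves on the circle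
of centre (A,B) and radius |α−1|·r₀/2. -/
theorem pulsating_cylinder_circular_trajectories
    (f α r₀ θ₀ : ℝ) (hf : 0 < f) (hα : 0 < α) (hr₀ : 0 < r₀)
    (τ r θ x y : ℝ → ℝ) (A B R : ℝ)
    (hτ : τ = fun t => Real.tan (f * t / 2))
    (hr : r = fun t => r₀ * Real.sqrt ((1 + α ^ 2 * (τ t) ^ 2) / (1 + (τ t) ^ 2)))
    (hθ : θ = fun t => θ₀ + Real.arctan (α * τ t) - Real.arctan (τ t))
    (hx : x = fun t => r t * Real.cos (θ t))
    (hy : y = fun t => r t * Real.sin (θ t))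
    (hA : A = ((α + 1) / 2) * r₀ * Real.cos θ₀)
    (hB : B = ((α + 1) / 2) * r₀ * Real.sin θ₀)
    (hR : R = ((α - 1) / 2) * r₀) :
    ∀ t ∈ Set.Ioo (-(Real.pi / f)) (Real.pi / f),
      (x t - A) ^ 2 + (y t - B) ^ 2 = R ^ 2 :=
  pulsating_cylinder_circular_trajectories_general f α r₀ θ₀ τ r θ x y A B R hτ hr hθ hx hy hA hB hR
end

section
/- With X₁,…,X₄ as the translation and helical-rotation symmetry vector fields of the rotating shallow water equations, the four vector fields Y₁ = X₂ − X₄, Y₂ = X₃ − X₁, Y₃ = X₁ + X₃, Y₄ = X₂ + X₄ commute pairwise: [Yᵢ, Yⱼ] = 0 for all i, j ∈ {1,2,3,4}. -/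
/-!
Each Yᵢ has the form Σ aⱼ(t) ∂ⱼ with no ∂_t component: its coefficients depend on `t` alone and
it never differentiates in `t`. Two such fields commute, since in `[Z, W]ⁱ = Zʲ ∂ⱼWⁱ − Wʲ ∂ⱼZⁱ`
every term has either `j = t`, where the coefficient vanishes, or `j ≠ t`, where the derivative does.
-/

/-- Partial derivative of a function on ℝ⁶ in the j-th coordinate direction. -/
noncomputable def pderiv6 (j : Fin 6) (F : (Fin 6 → ℝ) → ℝ) (p : Fin 6 → ℝ) : ℝ :=
  deriv (fun s => F (Function.update p j s)) (p j)

/-- Commutator of two vector fields on ℝ⁶, viewed as first-order differential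
operators: [X,Y]ⁱ = Xʲ ∂ⱼYⁱ − Yʲ ∂ⱼXⁱ. -/
noncomputable def vfBracket (X Y : (Fin 6 → ℝ) → Fin 6 → ℝ) :
    (Fin 6 → ℝ) → Fin 6 → ℝ :=
  fun p i => (∑ j, X p j * pderiv6 j (fun q => Y q i) p)
           - (∑ j, Y p j * pderiv6 j (fun q => X q i) p)

/-- `Z = Σ_{i ≠ k} aᵢ(x_k) ∂ᵢ`. -/
def IsTransverseToCoord (k : Fin 6) (Z : (Fin 6 → ℝ) → Fin 6 → ℝ) : Prop :=
  ∃ a : ℝ → Fin 6 → ℝ, (∀ t, a t k = 0) ∧ Z = fun q => a (q k)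

namespace IsTransverseToCoord

variable {k : Fin 6} {Z W : (Fin 6 → ℝ) → Fin 6 → ℝ}

theorem add (hZ : IsTransverseToCoord k Z) (hW : IsTransverseToCoord k W) :
    IsTransverseToCoord k (Z + W) := by
  obtain ⟨a, ha, rfl⟩ := hZ
  obtain ⟨b, hb, rfl⟩ := hW
  exact ⟨a + b, fun t => by simp [ha, hb], rfl⟩

theorem sub (hZ : IsTransverseToCoord k Z) (hW : IsTransverseToCoord k W) :
    IsTransverseToCoord k (Z - W) := by
  obtain ⟨a, ha, rfl⟩ := hZ
  obtain ⟨b, hb, rfl⟩ := hW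
  exact ⟨a - b, fun t => by simp [ha, hb], rfl⟩

end IsTransverseToCoord

theorem pderiv6_comp_eval_of_ne {j k : Fin 6} (hjk : j ≠ k) (g : ℝ → ℝ) (p : Fin 6 → ℝ) :
    pderiv6 j (fun q => g (q k)) p = 0 := by
  simp only [pderiv6, Function.update_of_ne hjk.symm, deriv_const]

theorem sum_mul_pderiv6_eq_zero_of_isTransverseToCoord {k : Fin 6}
    {Z W : (Fin 6 → ℝ) → Fin 6 → ℝ} (hZ : IsTransverseToCoord k Z)
    (hW : IsTransverseToCoord k W) (p : Fin 6 → ℝ) (i : Fin 6) :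
    ∑ j, Z p j * pderiv6 j (fun q => W q i) p = 0 := by
  obtain ⟨a, ha, rfl⟩ := hZ
  obtain ⟨b, -, rfl⟩ := hW
  refine Finset.sum_eq_zero fun j _ => ?_
  rcases eq_or_ne j k with rfl | hjk
  · exact mul_eq_zero_of_left (ha (p j)) _
  · rw [pderiv6_comp_eval_of_ne hjk (fun t => b t i), mul_zero]

theorem vfBracket_eq_zero_of_isTransverseToCoord {k : Fin 6}
    {Z W : (Fin 6 → ℝ) → Fin 6 → ℝ} (hZ : IsTransverseToCoord k Z)
    (hW : IsTransverseToCoord k W) : vfBracket Z W = 0 := by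
  funext p i
  simp only [vfBracket, sum_mul_pderiv6_eq_zero_of_isTransverseToCoord hZ hW,
    sum_mul_pderiv6_eq_zero_of_isTransverseToCoord hW hZ, sub_zero, Pi.zero_apply]

theorem abelian_nilradical_of_rsw_symmetries_general
    (f : ℝ)
    (X₁ X₂ X₃ X₄ Y₁ Y₂ Y₃ Y₄ : (Fin 6 → ℝ) → Fin 6 → ℝ)
    (hX₁ : X₁ = fun _ => ![0, 1, 0, 0, 0, 0])
    (hX₂ : X₂ = fun _ => ![0, 0, 1, 0, 0, 0])
    (hX₃ : X₃ = fun p =>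
      ![0, Real.cos (f * p 0), -Real.sin (f * p 0),
        -(f * Real.sin (f * p 0)), -(f * Real.cos (f * p 0)), 0])
    (hX₄ : X₄ = fun p =>
      ![0, Real.sin (f * p 0), Real.cos (f * p 0),
        f * Real.cos (f * p 0), -(f * Real.sin (f * p 0)), 0])
    (hY₁ : Y₁ = X₂ - X₄) (hY₂ : Y₂ = X₃ - X₁)
    (hY₃ : Y₃ = X₁ + X₃) (hY₄ : Y₄ = X₂ + X₄) :
    ∀ Z ∈ ({Y₁, Y₂, Y₃, Y₄} : Set ((Fin 6 → ℝ) → Fin 6 → ℝ)),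
    ∀ W ∈ ({Y₁, Y₂, Y₃, Y₄} : Set ((Fin 6 → ℝ) → Fin 6 → ℝ)),
      vfBracket Z W = 0 := by
  have h₁ : IsTransverseToCoord 0 X₁ := ⟨fun _ => ![0, 1, 0, 0, 0, 0], fun _ => rfl, hX₁⟩
  have h₂ : IsTransverseToCoord 0 X₂ := ⟨fun _ => ![0, 0, 1, 0, 0, 0], fun _ => rfl, hX₂⟩
  have h₃ : IsTransverseToCoord 0 X₃ := ⟨fun t => ![0, Real.cos (f * t), -Real.sin (f * t),
    -(f * Real.sin (f * t)), -(f * Real.cos (f * t)), 0], fun _ => rfl, hX₃⟩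
  have h₄ : IsTransverseToCoord 0 X₄ := ⟨fun t => ![0, Real.sin (f * t), Real.cos (f * t),
    f * Real.cos (f * t), -(f * Real.sin (f * t)), 0], fun _ => rfl, hX₄⟩
  have hY : ∀ Z ∈ ({Y₁, Y₂, Y₃, Y₄} : Set ((Fin 6 → ℝ) → Fin 6 → ℝ)),
      IsTransverseToCoord 0 Z := by
    rintro Z (rfl | rfl | rfl | rfl)
    · exact hY₁ ▸ h₂.sub h₄
    · exact hY₂ ▸ h₃.sub h₁
    · exact hY₃ ▸ h₁.add h₃
    · exact hY₄ ▸ h₂.add h₄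
  exact fun Z hZ W hW => vfBracket_eq_zero_of_isTransverseToCoord (hY Z hZ) (hY W hW)

/-- The fields Y₁ = X₂ − X₄, Y₂ = X₃ − X₁, Y₃ = X₁ + X₃, Y₄ = X₂ + X₄ built
from the translation and helical-rotation symmetries of the rotating shallow
water equations commute pairwise. -/
theorem abelian_nilradical_of_rsw_symmetries
    (f : ℝ) (hf : f ≠ 0)
    (X₁ X₂ X₃ X₄ Y₁ Y₂ Y₃ Y₄ : (Fin 6 → ℝ) → Fin 6 → ℝ)
    (hX₁ : X₁ = fun _ => ![0, 1, 0, 0, 0, 0])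
    (hX₂ : X₂ = fun _ => ![0, 0, 1, 0, 0, 0])
    (hX₃ : X₃ = fun p =>
      ![0, Real.cos (f * p 0), -Real.sin (f * p 0),
        -(f * Real.sin (f * p 0)), -(f * Real.cos (f * p 0)), 0])
    (hX₄ : X₄ = fun p =>
      ![0, Real.sin (f * p 0), Real.cos (f * p 0),
        f * Real.cos (f * p 0), -(f * Real.sin (f * p 0)), 0])
    (hY₁ : Y₁ = X₂ - X₄) (hY₂ : Y₂ = X₃ - X₁)
    (hY₃ : Y₃ = X₁ + X₃) (hY₄ : Y₄ = X₂ + X₄) :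
    ∀ Z ∈ ({Y₁, Y₂, Y₃, Y₄} : Set ((Fin 6 → ℝ) → Fin 6 → ℝ)),
    ∀ W ∈ ({Y₁, Y₂, Y₃, Y₄} : Set ((Fin 6 → ℝ) → Fin 6 → ℝ)),
      vfBracket Z W = 0 :=
  abelian_nilradical_of_rsw_symmetries_general f X₁ X₂ X₃ X₄ Y₁ Y₂ Y₃ Y₄ hX₁ hX₂ hX₃ hX₄ hY₁ hY₂ hY₃
    hY₄
end

section
/- Let f > 0, g > 0, and set l = −f²·√(α/(12g)) for some α > 0. Define V̄(r) = l·r² and h̄(r) = (l²/(4g))·(r⁴ + (4f/(3l))·r³ + f⁴/(3l⁴)). Then: (i) g·h̄'(r) = V̄(r)²/r + f·V̄(r) for all r > 0 (so (0, V̄, h̄) is a stationary rotationally symmetric rotating shallow water solution); (ii) h̄(−f/l) = 0 and h̄(r) > 0 for 0 ≤ r < −f/l; (iii) h̄ attains its maximum on [0, −f/l] at r = 0. -/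
/-!
With `c = -f/l > 0` the bracket in `h̄` is the quartic `r⁴ - (4c/3) r³ + c⁴/3`, which factors as
`(r - c)² (r² + (2c/3) r + c²/3)`: the second factor is `(r + c/3)² + 2c²/9 > 0`, so `h̄` has a
double root at `c` and is positive elsewhere. Moreover `h̄(0) - h̄(r)` is a positive multiple of
`r³ (4c/3 - r)`, which is nonnegative on `[0, c]`.
-/

namespace LiquidDrop

noncomputable def quartic (c r : ℝ) : ℝ := r ^ 4 - 4 * c / 3 * r ^ 3 + c ^ 4 / 3

variable (c : ℝ)

theorem quartic_eq_sq_mul (r : ℝ) :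
    quartic c r = (r - c) ^ 2 * (r ^ 2 + 2 * c / 3 * r + c ^ 2 / 3) := by
  unfold quartic
  ring

@[simp]
theorem quartic_self : quartic c c = 0 := by
  simp [quartic_eq_sq_mul]

theorem quartic_pos_of_ne {r : ℝ} (hr : r ≠ c) : 0 < quartic c r := by
  rcases eq_or_ne c 0 with rfl | hc
  · simpa [quartic] using (by decide : Even 4).pow_pos hr
  · rw [quartic_eq_sq_mul]
    have hfactor : 0 < r ^ 2 + 2 * c / 3 * r + c ^ 2 / 3 := by
      nlinarith [sq_nonneg (r + c / 3), sq_pos_of_ne_zero hc]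
    exact mul_pos ((by decide : Even 2).pow_pos (sub_ne_zero.2 hr)) hfactor

theorem quartic_le_quartic_zero {r : ℝ} (hr₀ : 0 ≤ r) (hr : r ≤ 4 * c / 3) :
    quartic c r ≤ quartic c 0 := by
  have hdiff : quartic c 0 - quartic c r = r ^ 3 * (4 * c / 3 - r) := by
    unfold quartic
    ring
  have : 0 ≤ r ^ 3 * (4 * c / 3 - r) := mul_nonneg (pow_nonneg hr₀ 3) (by linarith)
  linarith

theorem hasDerivAt_quartic (r : ℝ) :
    HasDerivAt (quartic c) (4 * r ^ 3 - 4 * c * r ^ 2) r := by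
  have h := (((hasDerivAt_pow 4 r).sub ((hasDerivAt_pow 3 r).const_mul (4 * c / 3))).add_const
    (c ^ 4 / 3))
  exact h.congr_deriv (by push_cast; ring)

end LiquidDrop

open LiquidDrop in
/-- The liquid-drop profile: V̄ = l·r², h̄ the displayed quartic with
l = −f²√(α/(12g)). (i) stationary balance g·h̄' = V̄²/r + f·V̄;
(ii) h̄ vanishes at r = −f/l and is positive on [0, −f/l);
(iii) h̄ is maximal at r = 0 on [0, −f/l]. -/
theorem liquid_drop_profile
    (f g α l : ℝ) (hf : 0 < f) (hg : 0 < g) (hα : 0 < α)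
    (hl : l = -(f ^ 2 * Real.sqrt (α / (12 * g))))
    (Vbar hbar : ℝ → ℝ)
    (hV : Vbar = fun r => l * r ^ 2)
    (hh : hbar = fun r =>
      (l ^ 2 / (4 * g)) * (r ^ 4 + (4 * f / (3 * l)) * r ^ 3 + f ^ 4 / (3 * l ^ 4))) :
    (∀ r > (0 : ℝ), g * deriv hbar r = (Vbar r) ^ 2 / r + f * Vbar r) ∧
    hbar (-f / l) = 0 ∧
    (∀ r : ℝ, 0 ≤ r → r < -f / l → 0 < hbar r) ∧
    (∀ r ∈ Set.Icc (0 : ℝ) (-f / l), hbar r ≤ hbar 0) := by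
  have hl₀ : l < 0 := by
    rw [hl, neg_lt_zero]
    exact mul_pos (pow_pos hf 2) (Real.sqrt_pos.2 (by positivity))
  have hl_ne : l ≠ 0 := hl₀.ne
  have hc : 0 < -f / l := div_pos_of_neg_of_neg (neg_neg_of_pos hf) hl₀
  have hscale : 0 < l ^ 2 / (4 * g) := by positivity
  have hh' : hbar = fun r => l ^ 2 / (4 * g) * quartic (-f / l) r := by
    rw [hh]
    funext r
    unfold quartic
    field_simp
    ring
  subst hh' hV
  refine ⟨fun r hr => ?_, by simp, fun r hr₀ hr => ?_, fun r ⟨hr₀, hr⟩ => ?_⟩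
  · rw [((hasDerivAt_quartic _ r).const_mul _).deriv]
    field_simp
    ring
  · exact mul_pos hscale (quartic_pos_of_ne _ hr.ne)
  · exact mul_le_mul_of_nonneg_left (quartic_le_quartic_zero _ hr₀ (by linarith)) hscale.le
end

section
/- Let f, g > 0 and φ₀ ≤ 0, η₀ > 0 be constants. Consider the ODE system φ' = −f²/4 − φ² − 2gη, η' = −4φη, subject to φ(0) = φ₀, η(0) = η₀. Then along any solution with η > 0, the quantity E(φ, η) = (φ² − 2gη + f²/4)/√η is constant; equivalently φ(t)² = 2gη(t) − f²/4 + (φ₀² − 2gη₀ + f²/4)·√(η(t)/η₀). -/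
/-- Along solutions of φ' = −f²/4 − φ² − 2gη, η' = −4φη with η > 0
(the ψ ≡ −f/2 reduction), the quantity (φ² − 2gη + f²/4)/√η is conserved;
equivalently φ² = 2gη − f²/4 + (φ₀² − 2gη₀ + f²/4)√(η/η₀). -/
theorem conserved_quantity_of_ring_collapse
    (f g φ₀ η₀ a b : ℝ) (hf : 0 < f) (hg : 0 < g)
    (hφ₀ : φ₀ ≤ 0) (hη₀ : 0 < η₀)
    (ha : a < 0) (hb : 0 < b)
    (φ η : ℝ → ℝ)
    (hφ' : ∀ t ∈ Set.Ioo a b,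
      HasDerivAt φ (-(f ^ 2 / 4) - φ t ^ 2 - 2 * g * η t) t)
    (hη' : ∀ t ∈ Set.Ioo a b, HasDerivAt η (-4 * φ t * η t) t)
    (hpos : ∀ t ∈ Set.Ioo a b, 0 < η t)
    (h0φ : φ 0 = φ₀) (h0η : η 0 = η₀) :
    ∀ t ∈ Set.Ioo a b,
      (φ t ^ 2 - 2 * g * η t + f ^ 2 / 4) / Real.sqrt (η t)
        = (φ₀ ^ 2 - 2 * g * η₀ + f ^ 2 / 4) / Real.sqrt η₀ ∧
      φ t ^ 2 = 2 * g * η t - f ^ 2 / 4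
        + (φ₀ ^ 2 - 2 * g * η₀ + f ^ 2 / 4) * Real.sqrt (η t / η₀) := by
  have h0mem : (0:ℝ) ∈ Set.Ioo a b := ⟨ha, hb⟩
  set E : ℝ → ℝ := fun t => (φ t ^ 2 - 2 * g * η t + f ^ 2 / 4) / Real.sqrt (η t) with hEdef
  -- derivative of E is zero on the interval
  have key : ∀ t ∈ Set.Ioo a b, HasDerivAt E 0 t := by
    intro t ht
    have hηt := hpos t ht
    have hsp : 0 < Real.sqrt (η t) := Real.sqrt_pos.mpr hηt
    have hs : Real.sqrt (η t) ≠ 0 := hsp.ne'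
    have hN : HasDerivAt (fun u => φ u ^ 2 - 2 * g * η u + f ^ 2 / 4)
        (2 * φ t ^ 1 * (-(f ^ 2 / 4) - φ t ^ 2 - 2 * g * η t)
          - 2 * g * (-4 * φ t * η t)) t := by
      have h1 : HasDerivAt (fun u => φ u ^ 2)
          ((2:ℕ) * φ t ^ (2 - 1) * (-(f ^ 2 / 4) - φ t ^ 2 - 2 * g * η t)) t :=
        (hφ' t ht).pow 2
      have h2 : HasDerivAt (fun u => 2 * g * η u) (2 * g * (-4 * φ t * η t)) t :=
        (hη' t ht).const_mul (2 * g)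
      have h3 := (h1.sub h2).add_const (f ^ 2 / 4)
      simpa using h3
    have hS : HasDerivAt (fun u => Real.sqrt (η u))
        (-4 * φ t * η t / (2 * Real.sqrt (η t))) t :=
      (hη' t ht).sqrt hηt.ne'
    have hdiv := hN.div hS hs
    convert hdiv using 1
    case e'_4 => rfl
    case e'_5 => rfl
    case e'_8 => rfl
    have h2 : Real.sqrt (η t) ^ 2 = η t := Real.sq_sqrt hηt.le
    set s := Real.sqrt (η t) with hsdef
    rw [← h2]
    field_simp
    ring
  -- E is constant on the interval
  have hconst : ∀ t ∈ Set.Ioo a b, E t = E 0 := by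
    intro t ht
    have hconv : Convex ℝ (Set.Ioo a b) := convex_Ioo a b
    have hdiff : DifferentiableOn ℝ E (Set.Ioo a b) :=
      fun x hx => ((key x hx).differentiableAt).differentiableWithinAt
    refine hconv.is_const_of_fderivWithin_eq_zero hdiff (fun x hx => ?_) ht h0mem
    rw [fderivWithin_of_isOpen isOpen_Ioo hx]
    rw [(key x hx).hasFDerivAt.fderiv]
    ext; simp
  intro t ht
  have hηt := hpos t ht
  have hsp : 0 < Real.sqrt (η t) := Real.sqrt_pos.mpr hηt
  have hsp0 : 0 < Real.sqrt η₀ := Real.sqrt_pos.mpr hη₀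
  have hE0 : E 0 = (φ₀ ^ 2 - 2 * g * η₀ + f ^ 2 / 4) / Real.sqrt η₀ := by
    simp [hEdef, h0φ, h0η]
  have h1 : (φ t ^ 2 - 2 * g * η t + f ^ 2 / 4) / Real.sqrt (η t)
      = (φ₀ ^ 2 - 2 * g * η₀ + f ^ 2 / 4) / Real.sqrt η₀ := by
    rw [← hE0]; exact hconst t ht
  refine ⟨h1, ?_⟩
  have hdivsqrt : Real.sqrt (η t / η₀) = Real.sqrt (η t) / Real.sqrt η₀ :=
    Real.sqrt_div hηt.le η₀
  rw [hdivsqrt]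
  have h2 : φ t ^ 2 - 2 * g * η t + f ^ 2 / 4
      = (φ₀ ^ 2 - 2 * g * η₀ + f ^ 2 / 4) / Real.sqrt η₀ * Real.sqrt (η t) := by
    field_simp at h1 ⊢
    linarith [h1]
  linear_combination h2
end

section
/- Fix f > 0 and α > 0, and define T : ℝ → ℝ on the set of t with t ≠ (2k+1)π/f by T(t) = (2/f)·arctan(α·tan(ft/2)) + χ(t), where χ(t) = 2πk/f for t ∈ ((2k−1)π/f, (2k+1)π/f), k ∈ ℤ. Then T extends to a continuous, strictly increasing bijection of ℝ onto ℝ by setting T((2k+1)π/f) = (2k+1)π/f, and this extension is continuously differentiable with T'(t) = α(1 + tan²(ft/2))/(1 + α²tan²(ft/2)) > 0 at points where tan(ft/2) is defined and T'((2k+1)π/f) = 1/α. -/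
/-!
On each branch, the subtraction formula for `arctan` gives
`arctan (α * tan ψ) = ψ + arctan ((α - 1) sin ψ cos ψ / (cos² ψ + α sin² ψ))` for
`|ψ| < π / 2`. The right-hand side `L ψ` is smooth on all of `ℝ`, commutes with `ψ ↦ ψ + π`
and equals `π / 2` at `π / 2`, so `T t = (2 / f) L (f t / 2)` everywhere, poles included.
Its derivative `α / (cos² ψ + α² sin² ψ)` is positive, and `|L ψ - ψ| < π / 2` makes `L` onto.
-/
open Real Filter

lemma cos_sq_add_mul_sin_sq_pos {a : ℝ} (ha : 0 < a) (ψ : ℝ) :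
    0 < cos ψ ^ 2 + a * sin ψ ^ 2 := by
  nlinarith [sin_sq_add_cos_sq ψ, sq_nonneg (sin ψ), sq_nonneg (cos ψ), min_le_left a 1,
    min_le_right a 1, lt_min ha one_pos]

noncomputable def liftArctanMulTan (α ψ : ℝ) : ℝ :=
  ψ + arctan ((α - 1) * sin ψ * cos ψ / (cos ψ ^ 2 + α * sin ψ ^ 2))

namespace liftArctanMulTan

variable {α : ℝ}

lemma add_int_mul_pi (α ψ : ℝ) (k : ℤ) :
    liftArctanMulTan α (ψ + k * π) = liftArctanMulTan α ψ + k * π := by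
  have hper : Function.Periodic
      (fun ψ => arctan ((α - 1) * sin ψ * cos ψ / (cos ψ ^ 2 + α * sin ψ ^ 2))) π := by
    intro ψ
    simp only [sin_add_pi, cos_add_pi, neg_sq, mul_neg, neg_mul, neg_neg]
  simp only [liftArctanMulTan, hper.int_mul k ψ]
  ring

lemma pi_div_two (α : ℝ) : liftArctanMulTan α (π / 2) = π / 2 := by
  simp [liftArctanMulTan]

lemma eq_arctan_mul_tan (hα : 0 < α) {ψ : ℝ} (h₁ : -(π / 2) < ψ) (h₂ : ψ < π / 2) :
    liftArctanMulTan α ψ = arctan (α * tan ψ) := by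
  have hc : 0 < cos ψ := cos_pos_of_mem_Ioo ⟨h₁, h₂⟩
  have hD := cos_sq_add_mul_sin_sq_pos hα ψ
  have hprod : α * tan ψ * -tan ψ < 1 := by nlinarith [sq_nonneg (tan ψ)]
  have hadd := arctan_add hprod
  rw [arctan_neg, arctan_tan h₁ h₂] at hadd
  have harg : (α * tan ψ + -tan ψ) / (1 - α * tan ψ * -tan ψ) =
      (α - 1) * sin ψ * cos ψ / (cos ψ ^ 2 + α * sin ψ ^ 2) := by
    have hb : 1 - α * tan ψ * -tan ψ ≠ 0 := by nlinarith [sq_nonneg (tan ψ)]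
    rw [div_eq_div_iff hb hD.ne', tan_eq_sin_div_cos]
    field_simp
    ring
  rw [liftArctanMulTan, ← harg]
  linarith

lemma hasDerivAt (hα : 0 < α) (ψ : ℝ) :
    HasDerivAt (liftArctanMulTan α) (α / (cos ψ ^ 2 + α ^ 2 * sin ψ ^ 2)) ψ := by
  have hD := cos_sq_add_mul_sin_sq_pos hα ψ
  have hD2 := cos_sq_add_mul_sin_sq_pos (pow_pos hα 2) ψ
  have hq := (((hasDerivAt_sin ψ).const_mul (α - 1)).mul (hasDerivAt_cos ψ)).div
    (((hasDerivAt_cos ψ).pow 2).add (((hasDerivAt_sin ψ).pow 2).const_mul α)) hD.ne'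
  refine ((hasDerivAt_id ψ).add hq.arctan).congr_deriv ?_
  dsimp only [Pi.mul_apply, Pi.div_apply, Pi.add_apply, Pi.pow_apply, id]
  have hpyth := sin_sq_add_cos_sq ψ
  field_simp
  linear_combination α * (cos ψ ^ 2 + α ^ 2 * sin ψ ^ 2) * (sin ψ ^ 2 + cos ψ ^ 2) * hpyth

lemma contDiff (hα : 0 < α) {n : WithTop ℕ∞} : ContDiff ℝ n (liftArctanMulTan α) := by
  unfold liftArctanMulTan
  refine contDiff_id.add (contDiff_arctan.comp ?_)
  exact ((contDiff_const.mul contDiff_sin).mul contDiff_cos).div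
    ((contDiff_cos.pow 2).add (contDiff_const.mul (contDiff_sin.pow 2)))
    fun ψ => (cos_sq_add_mul_sin_sq_pos hα ψ).ne'

lemma surjective (hα : 0 < α) : Function.Surjective (liftArctanMulTan α) := by
  refine (contDiff hα (n := 0)).continuous.surjective ?_ ?_
  · refine tendsto_atTop_mono (fun ψ => ?_) (tendsto_atTop_add_const_right _ (-(π / 2)) tendsto_id)
    have := neg_pi_div_two_lt_arctan ((α - 1) * sin ψ * cos ψ / (cos ψ ^ 2 + α * sin ψ ^ 2))
    simp only [liftArctanMulTan, id]
    linarith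
  · refine tendsto_atBot_mono (fun ψ => ?_) (tendsto_atBot_add_const_right _ (π / 2) tendsto_id)
    have := arctan_lt_pi_div_two ((α - 1) * sin ψ * cos ψ / (cos ψ ^ 2 + α * sin ψ ^ 2))
    simp only [liftArctanMulTan, id]
    linarith

end liftArctanMulTan

lemma exists_int_mem_Ioo_of_ne_odd_mul {c t : ℝ} (hc : 0 < c) (ht : ∀ k : ℤ, t ≠ (2 * k + 1) * c) :
    ∃ k : ℤ, t ∈ Set.Ioo ((2 * k - 1) * c) ((2 * k + 1) * c) := by
  set k := ⌊(t / c + 1) / 2⌋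
  have hle : (k : ℝ) ≤ (t / c + 1) / 2 := Int.floor_le _
  have hlt : (t / c + 1) / 2 < k + 1 := Int.lt_floor_add_one _
  have hne : (k : ℝ) ≠ (t / c + 1) / 2 := by
    intro h
    apply ht (k - 1)
    push_cast
    field_simp at h
    linarith
  refine ⟨k, ?_, ?_⟩
  · have : (2 * k - 1 : ℝ) < t / c := by linarith [lt_of_le_of_ne hle hne]
    rwa [lt_div_iff₀ hc] at this
  · have : t / c < 2 * k + 1 := by linarith
    rwa [div_lt_iff₀ hc] at this

lemma mul_one_add_tan_sq_div_eq (α : ℝ) {ψ : ℝ} (hψ : cos ψ ≠ 0) :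
    α * (1 + tan ψ ^ 2) / (1 + α ^ 2 * tan ψ ^ 2) = α / (cos ψ ^ 2 + α ^ 2 * sin ψ ^ 2) := by
  rw [tan_eq_sin_div_cos]
  field_simp
  rw [cos_sq_add_sin_sq, mul_one]

noncomputable def timeMap (f α t : ℝ) : ℝ := 2 / f * liftArctanMulTan α (f * t / 2)

namespace timeMap

variable {f α : ℝ}

lemma odd_mul_pi_div (hf : f ≠ 0) (α : ℝ) (k : ℤ) :
    timeMap f α ((2 * k + 1) * π / f) = (2 * k + 1) * π / f := by
  have h : f * ((2 * k + 1) * π / f) / 2 = π / 2 + k * π := by field_simp; ring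
  rw [timeMap, h, liftArctanMulTan.add_int_mul_pi, liftArctanMulTan.pi_div_two]
  field_simp
  ring

lemma eq_of_mem_Ioo (hf : 0 < f) (hα : 0 < α) {k : ℤ} {t : ℝ}
    (ht : t ∈ Set.Ioo ((2 * k - 1) * π / f) ((2 * k + 1) * π / f)) :
    timeMap f α t = 2 / f * arctan (α * tan (f * t / 2)) + 2 * π * k / f := by
  obtain ⟨h₁, h₂⟩ := ht
  rw [div_lt_iff₀ hf] at h₁
  rw [lt_div_iff₀ hf] at h₂
  have hψ : f * t / 2 = (f * t / 2 - k * π) + k * π := by ring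
  rw [timeMap, hψ, liftArctanMulTan.add_int_mul_pi, tan_add_int_mul_pi,
    liftArctanMulTan.eq_arctan_mul_tan hα (by linarith) (by linarith)]
  field_simp

lemma hasDerivAt (hf : f ≠ 0) (hα : 0 < α) (t : ℝ) :
    HasDerivAt (timeMap f α) (α / (cos (f * t / 2) ^ 2 + α ^ 2 * sin (f * t / 2) ^ 2)) t := by
  have h := ((liftArctanMulTan.hasDerivAt hα (f * t / 2)).comp t
    (((hasDerivAt_id t).const_mul f).div_const 2)).const_mul (2 / f)
  refine h.congr_deriv ?_
  field_simp

lemma strictMono (hf : f ≠ 0) (hα : 0 < α) : StrictMono (timeMap f α) :=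
  strictMono_of_hasDerivAt_pos (hasDerivAt hf hα) fun _ =>
    div_pos hα (cos_sq_add_mul_sin_sq_pos (pow_pos hα 2) _)

lemma hasDerivAt_of_ne_odd (hf : f ≠ 0) (hα : 0 < α) {t : ℝ}
    (ht : ∀ k : ℤ, t ≠ (2 * k + 1) * π / f) :
    HasDerivAt (timeMap f α)
      (α * (1 + tan (f * t / 2) ^ 2) / (1 + α ^ 2 * tan (f * t / 2) ^ 2)) t := by
  have hcos : cos (f * t / 2) ≠ 0 := fun h => by
    obtain ⟨k, hk⟩ := cos_eq_zero_iff.mp h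
    exact ht k (by field_simp; linarith)
  rw [mul_one_add_tan_sq_div_eq α hcos]
  exact hasDerivAt hf hα t

lemma hasDerivAt_odd_mul_pi_div (hf : f ≠ 0) (hα : 0 < α) (k : ℤ) :
    HasDerivAt (timeMap f α) (1 / α) ((2 * k + 1) * π / f) := by
  have hθ : f * ((2 * k + 1) * π / f) / 2 = (2 * k + 1) * π / 2 := by field_simp
  have hcos : cos ((2 * k + 1) * π / 2) = 0 := cos_eq_zero_iff.mpr ⟨k, rfl⟩
  have hsin : sin ((2 * k + 1) * π / 2) ^ 2 = 1 := by
    linear_combination sin_sq_add_cos_sq ((2 * k + 1) * π / 2) - cos ((2 * k + 1) * π / 2) * hcos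
  refine (hasDerivAt hf hα _).congr_deriv ?_
  rw [hθ, hcos, hsin, zero_pow two_ne_zero, zero_add, mul_one]
  field_simp

lemma contDiff (hα : 0 < α) {n : WithTop ℕ∞} : ContDiff ℝ n (timeMap f α) :=
  contDiff_const.mul ((liftArctanMulTan.contDiff hα).comp
    ((contDiff_const.mul contDiff_id).div_const 2))

lemma surjective (hf : f ≠ 0) (hα : 0 < α) : Function.Surjective (timeMap f α) := by
  intro y
  obtain ⟨ψ, hψ⟩ := liftArctanMulTan.surjective hα (f * y / 2)
  refine ⟨2 * ψ / f, ?_⟩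
  rw [timeMap, show f * (2 * ψ / f) / 2 = ψ by field_simp, hψ]
  field_simp

lemma eq_of_branches (hf : 0 < f) (hα : 0 < α) {χ T : ℝ → ℝ}
    (hχ : ∀ k : ℤ, ∀ t ∈ Set.Ioo ((2 * k - 1) * π / f) ((2 * k + 1) * π / f),
      χ t = 2 * π * k / f)
    (hT : ∀ t : ℝ, (∀ k : ℤ, t ≠ (2 * k + 1) * π / f) →
      T t = 2 / f * arctan (α * tan (f * t / 2)) + χ t)
    (hTodd : ∀ k : ℤ, T ((2 * k + 1) * π / f) = (2 * k + 1) * π / f) :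
    T = timeMap f α := by
  funext t
  by_cases hodd : ∃ k : ℤ, t = (2 * k + 1) * π / f
  · obtain ⟨k, rfl⟩ := hodd
    rw [hTodd, odd_mul_pi_div hf.ne']
  · push Not at hodd
    obtain ⟨k, hk⟩ := exists_int_mem_Ioo_of_ne_odd_mul (div_pos pi_pos hf) (t := t)
      (by simpa only [mul_div_assoc] using hodd)
    simp only [← mul_div_assoc] at hk
    rw [hT t hodd, hχ k t hk, eq_of_mem_Ioo hf hα hk]

end timeMap

/-- The time reparameterization T(t) = (2/f)·arctan(α·tan(ft/2)) + χ(t),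
extended by T((2k+1)π/f) = (2k+1)π/f, is a continuously differentiable,
strictly increasing bijection of ℝ onto ℝ, with the stated derivative. -/
theorem time_map_is_C1_increasing_bijection
    (f α : ℝ) (hf : 0 < f) (hα : 0 < α)
    (χ T : ℝ → ℝ)
    (hχ : ∀ k : ℤ, ∀ t ∈ Set.Ioo ((2 * (k : ℝ) - 1) * Real.pi / f)
        ((2 * (k : ℝ) + 1) * Real.pi / f), χ t = 2 * Real.pi * (k : ℝ) / f)
    (hT : ∀ t : ℝ, (∀ k : ℤ, t ≠ (2 * (k : ℝ) + 1) * Real.pi / f) →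
        T t = (2 / f) * Real.arctan (α * Real.tan (f * t / 2)) + χ t)
    (hTodd : ∀ k : ℤ, T ((2 * (k : ℝ) + 1) * Real.pi / f)
        = (2 * (k : ℝ) + 1) * Real.pi / f) :
    Continuous T ∧ StrictMono T ∧ Function.Bijective T ∧ ContDiff ℝ 1 T ∧
    (∀ t : ℝ, (∀ k : ℤ, t ≠ (2 * (k : ℝ) + 1) * Real.pi / f) →
      HasDerivAt T (α * (1 + Real.tan (f * t / 2) ^ 2)
          / (1 + α ^ 2 * Real.tan (f * t / 2) ^ 2)) t ∧
      0 < α * (1 + Real.tan (f * t / 2) ^ 2)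
          / (1 + α ^ 2 * Real.tan (f * t / 2) ^ 2)) ∧
    (∀ k : ℤ, HasDerivAt T (1 / α) ((2 * (k : ℝ) + 1) * Real.pi / f)) := by
  rw [timeMap.eq_of_branches hf hα hχ hT hTodd]
  have hC1 : ContDiff ℝ 1 (timeMap f α) := timeMap.contDiff hα
  have hmono := timeMap.strictMono hf.ne' hα
  refine ⟨hC1.continuous, hmono, ⟨hmono.injective, timeMap.surjective hf.ne' hα⟩, hC1,
    fun t ht => ⟨timeMap.hasDerivAt_of_ne_odd hf.ne' hα ht, by positivity⟩,
    timeMap.hasDerivAt_odd_mul_pi_div hf.ne' hα⟩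
end
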